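/- Let W_n (n ≥ 3) be the wheel graph, which has n + 1 vertices and 2n edges. Then BRL1(W_n) = n[(n+1)^2(n^2 − 3n + 3) + 48]/(n−2)^2 and BRL2(W_n) = n[(n+1)^2(n^2 − 5n + 7) + 16]/(n−2)^2. -/

import Mathlib

open Finset SimpleGraph

variable {V : Type*}

/-- The degree of a vertex, as a real number. -/
noncomputable def deg [Fintype V] (G : SimpleGraph V) (v : V) : ℝ :=
  haveI := Classical.decEq V
  haveI : DecidableRel G.Adj := Classical.decRel _
  (G.degree v : ℝ)

/-- Sum of a symmetric function of the two endpoints, over the edges of `G`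
(each edge counted once). -/
noncomputable def edgeSum [Fintype V] (G : SimpleGraph V)
    (f : V → V → ℝ) (hf : ∀ u v, f u v = f v u) : ℝ :=
  haveI := Classical.decEq V
  haveI : DecidableRel G.Adj := Classical.decRel _
  ∑ e ∈ G.edgeFinset, Sym2.lift ⟨f, hf⟩ e

/-- The wheel graph `Wₙ`: the join of a single hub vertex (`none`) with the
cycle `Cₙ` (on the vertices `some i`). -/
def wheelGraph (n : ℕ) : SimpleGraph (Option (Fin n)) :=
  SimpleGraph.fromRel (fun u v =>
    u = none ∨ ∃ i j, u = some i ∧ v = some j ∧ (SimpleGraph.cycleGraph n).Adj i j)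

/-- The Banhatti degree of the endpoint `u` of an edge `uv`:
`B(u) = (d(u) + d(v) − 2)/(n − d(u))` where `n` is the number of vertices. -/
noncomputable def bdeg [Fintype V] (G : SimpleGraph V) (u v : V) : ℝ :=
  (deg G u + deg G v - 2) / ((Fintype.card V : ℝ) - deg G u)

/-- The first Banhatti Rehan–Lanel index:
`BRL₁(G) = Σ_{uv∈E(G)} (B(u)² + B(v)² + B(u)B(v))`. -/
noncomputable def BRL1 [Fintype V] (G : SimpleGraph V) : ℝ :=
  edgeSum G (fun u v => bdeg G u v ^ 2 + bdeg G v u ^ 2 + bdeg G u v * bdeg G v u)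
    (fun u v => by (try dsimp only); ring)

/-- The second Banhatti Rehan–Lanel index:
`BRL₂(G) = Σ_{uv∈E(G)} (B(u)² + B(v)² − B(u)B(v))`. -/
noncomputable def BRL2 [Fintype V] (G : SimpleGraph V) : ℝ :=
  edgeSum G (fun u v => bdeg G u v ^ 2 + bdeg G v u ^ 2 - bdeg G u v * bdeg G v u)
    (fun u v => by (try dsimp only); ring)


/-!
Every edge of `Wₙ` is either a spoke, joining the hub (degree `n`) to a rim vertex (degree `3`),
or a rim edge, joining two rim vertices. There are `n` spokes, and by the handshake lemma
`(n + 3n)/2 - n = n` rim edges. Since the Banhatti degrees depend only on the degrees of the two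
endpoints, each index is `n` times its spoke term plus `n` times its rim term, and the formulas
follow by clearing the denominator `n - 2`.
-/

section EdgeSum

variable [Fintype V] (G : SimpleGraph V)

/-- `(∑ u, deg G u) / 2` is the number of edges, by the handshake lemma. -/
theorem edgeSum_eq_of_incident_const (f : V → V → ℝ) (hf : ∀ u v, f u v = f v u) (v : V)
    (A B : ℝ) (hA : ∀ w, G.Adj v w → f v w = A)
    (hB : ∀ u w, G.Adj u w → u ≠ v → w ≠ v → f u w = B) :
    edgeSum G f hf = deg G v * A + ((∑ u, deg G u) / 2 - deg G v) * B := by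
  -- the instances that `edgeSum` and `deg` are defined with
  let := Classical.decEq V
  let : DecidableRel G.Adj := Classical.decRel _
  show ∑ e ∈ G.edgeFinset, Sym2.lift ⟨f, hf⟩ e
    = (G.degree v : ℝ) * A + ((∑ u, (G.degree u : ℝ)) / 2 - G.degree v) * B
  have hcard_at : #{e ∈ G.edgeFinset | v ∈ e} = G.degree v := by
    rw [← incidenceFinset_eq_filter, card_incidenceFinset_eq_degree]
  have hcard_off := card_filter_add_card_filter_not (s := G.edgeFinset) (v ∈ ·)
  have handshake : ∑ u, (G.degree u : ℝ) = 2 * #G.edgeFinset := by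
    exact_mod_cast sum_degrees_eq_twice_card_edges G
  rw [← sum_filter_add_sum_filter_not G.edgeFinset (v ∈ ·), sum_eq_card_nsmul (b := A),
    sum_eq_card_nsmul (b := B), nsmul_eq_mul, nsmul_eq_mul, handshake, hcard_at]
  · rw [← hcard_off, hcard_at]
    push_cast
    ring
  · intro e he
    induction e with
    | h u w =>
      simp only [mem_filter, mem_edgeFinset, mem_edgeSet, Sym2.mem_iff, not_or] at he
      exact hB u w he.1 (Ne.symm he.2.1) (Ne.symm he.2.2)
  · intro e he
    induction e with
    | h u w =>
      simp only [mem_filter, mem_edgeFinset, mem_edgeSet, Sym2.mem_iff] at he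
      obtain ⟨hadj, rfl | rfl⟩ := he
      · exact hA w hadj
      · exact (hf u v).trans (hA u hadj.symm)

end EdgeSum

section Wheel

variable {n : ℕ}

@[simp]
theorem wheelGraph_adj_none_some (i : Fin n) : (wheelGraph n).Adj none (some i) := by
  simp [wheelGraph]

@[simp]
theorem wheelGraph_adj_some_some {i j : Fin n} :
    (wheelGraph n).Adj (some i) (some j) ↔ (cycleGraph n).Adj i j := by
  simp only [wheelGraph, fromRel_adj, ne_eq, Option.some.injEq, reduceCtorEq, false_or]
  constructor
  · rintro ⟨-, ⟨a, b, rfl, rfl, hab⟩ | ⟨a, b, rfl, rfl, hab⟩⟩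
    exacts [hab, hab.symm]
  · intro h
    exact ⟨h.ne, Or.inl ⟨i, j, rfl, rfl, h⟩⟩

theorem wheelGraph_degree_none [Fintype ((wheelGraph n).neighborSet none)] :
    (wheelGraph n).degree none = n := by
  have h : (wheelGraph n).neighborFinset none = univ.map Function.Embedding.some := by
    ext (_ | j) <;> simp
  rw [degree, h, card_map, card_univ, Fintype.card_fin]

theorem wheelGraph_degree_some (i : Fin n) [Fintype ((wheelGraph n).neighborSet (some i))] :
    (wheelGraph n).degree (some i) = (cycleGraph n).degree i + 1 := by
  have h : (wheelGraph n).neighborFinset (some i)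
      = insert none (((cycleGraph n).neighborFinset i).map Function.Embedding.some) := by
    ext (_ | j)
    · simp [(wheelGraph_adj_none_some i).symm]
    · simp
  rw [degree, h, card_insert_of_notMem (by simp), card_map, degree]

theorem deg_wheelGraph_none : deg (wheelGraph n) none = n := by
  simp only [deg, wheelGraph_degree_none]

theorem deg_wheelGraph_some (hn : 3 ≤ n) (i : Fin n) : deg (wheelGraph n) (some i) = 3 := by
  obtain ⟨m, rfl⟩ := Nat.exists_eq_add_of_le' hn
  simp only [deg, wheelGraph_degree_some, cycleGraph_degree_three_le]
  norm_num

theorem edgeSum_wheelGraph (hn : 3 ≤ n) (f : Option (Fin n) → Option (Fin n) → ℝ)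
    (hf : ∀ u v, f u v = f v u) (A B : ℝ) (hA : ∀ i, f none (some i) = A)
    (hB : ∀ i j, (cycleGraph n).Adj i j → f (some i) (some j) = B) :
    edgeSum (wheelGraph n) f hf = n * A + n * B := by
  rw [edgeSum_eq_of_incident_const _ f hf none A B ?spoke ?rim, Fintype.sum_option,
    deg_wheelGraph_none]
  · simp only [deg_wheelGraph_some hn, sum_const, card_univ, Fintype.card_fin, nsmul_eq_mul]
    ring
  case spoke =>
    rintro (_ | i) h
    exacts [absurd h (wheelGraph n).irrefl, hA i]
  case rim =>
    rintro (_ | i) (_ | j) h hi hj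
    exacts [absurd rfl hi, absurd rfl hi, absurd rfl hj, hB i j (wheelGraph_adj_some_some.1 h)]

theorem bdeg_wheelGraph_none_some (hn : 3 ≤ n) (i : Fin n) :
    bdeg (wheelGraph n) none (some i) = n + 1 := by
  rw [bdeg, Fintype.card_option, Fintype.card_fin, deg_wheelGraph_none, deg_wheelGraph_some hn]
  push_cast
  ring

theorem bdeg_wheelGraph_some_none (hn : 3 ≤ n) (i : Fin n) :
    bdeg (wheelGraph n) (some i) none = (n + 1) / (n - 2) := by
  rw [bdeg, Fintype.card_option, Fintype.card_fin, deg_wheelGraph_none, deg_wheelGraph_some hn]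
  push_cast
  ring

theorem bdeg_wheelGraph_some_some (hn : 3 ≤ n) (i j : Fin n) :
    bdeg (wheelGraph n) (some i) (some j) = 4 / (n - 2) := by
  rw [bdeg, Fintype.card_option, Fintype.card_fin, deg_wheelGraph_some hn, deg_wheelGraph_some hn]
  push_cast
  ring

end Wheel

/-- For the wheel graph `Wₙ` (`n ≥ 3`), which has `n+1` vertices and `2n` edges:
`BRL₁(Wₙ) = n[(n+1)²(n² − 3n + 3) + 48]/(n−2)²` and
`BRL₂(Wₙ) = n[(n+1)²(n² − 5n + 7) + 16]/(n−2)²`. -/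
theorem BRL_wheelGraph (n : ℕ) (hn : 3 ≤ n) :
    BRL1 (wheelGraph n) =
        n * (((n : ℝ) + 1) ^ 2 * ((n : ℝ) ^ 2 - 3 * n + 3) + 48) / ((n : ℝ) - 2) ^ 2 ∧
      BRL2 (wheelGraph n) =
        n * (((n : ℝ) + 1) ^ 2 * ((n : ℝ) ^ 2 - 5 * n + 7) + 16) / ((n : ℝ) - 2) ^ 2 := by
  have hn2 : (n : ℝ) - 2 ≠ 0 := by
    have : (3 : ℝ) ≤ n := by exact_mod_cast hn
    linarith
  have hhub (i : Fin n) := bdeg_wheelGraph_none_some hn i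
  have hspoke (i : Fin n) := bdeg_wheelGraph_some_none hn i
  have hrim (i j : Fin n) := bdeg_wheelGraph_some_some hn i j
  constructor
  · rw [BRL1, edgeSum_wheelGraph hn _ _ _ _ (fun i => by rw [hhub, hspoke])
      (fun i j _ => by rw [hrim, hrim])]
    field_simp
    ring
  · rw [BRL2, edgeSum_wheelGraph hn _ _ _ _ (fun i => by rw [hhub, hspoke])
      (fun i j _ => by rw [hrim, hrim])]
    field_simp
    ring
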